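/- Let μ be a regular TIS state of the F-SSEP with μ(F) = 0. Let I ⊂ ℤ be an interval and θ ∈ {0,1}^I, and suppose that either |I| ≥ 2, or I = {i} and θ(i) = 0. Then P_μ({ξ : ξ_t|_I = θ for all t ∈ ℤ}) = 0. -/

import Mathlib

open MeasureTheory Filter
open scoped ENNReal

attribute [local instance] Classical.propDecidable

noncomputable section
namespace FSSEPPaper

/-- Configuration space of the F-SSEP. -/
abbrev X : Type := ℤ → Bool
/-- Configuration space of the SSM (stack model). -/
abbrev XS : Type := ℤ → ℕ
/-- Parity sequences. -/
abbrev PS : Type := ℤ → Bool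

/-- The `(m+1)`-st binary digit of `x`. -/
def rbit (m : ℕ) (x : ℝ) : Bool := decide (⌊x * 2 ^ (m + 1)⌋ % 2 = 1)

/-- The i.i.d. fair-coin product measure on `ℤ → Bool`, realized through the binary
digits of a uniform random number in `(0,1)`. -/
def coin : Measure (ℤ → Bool) :=
  (volume.restrict (Set.Ioo (0:ℝ) 1)).map (fun x (i : ℤ) => rbit (Encodable.encode i) x)

/-! ### F-SSEP dynamics -/

/-- `wantsR η i`: the particle at `i` attempts to jump to the right. -/
def wantsR (η : X) (i : ℤ) : Bool := η i && η (i - 1) && !η (i + 1)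
/-- `wantsL η i`: the particle at `i` attempts to jump to the left. -/
def wantsL (η : X) (i : ℤ) : Bool := η i && η (i + 1) && !η (i - 1)
/-- The particle at `i` jumps to the right (the coin at the target site resolves conflicts). -/
def jumpsR (η : X) (α : ℤ → Bool) (i : ℤ) : Bool :=
  wantsR η i && (!(wantsL η (i + 2)) || α (i + 1))
/-- The particle at `i` jumps to the left. -/
def jumpsL (η : X) (α : ℤ → Bool) (i : ℤ) : Bool :=
  wantsL η i && (!(wantsR η (i - 2)) || !(α (i - 1)))
/-- One synchronous step of the F-SSEP given the coin field `α`. -/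
def fstep (η : X) (α : ℤ → Bool) : X := fun i =>
  (η i && !(jumpsR η α i) && !(jumpsL η α i)) || jumpsR η α (i - 1) || jumpsL η α (i + 1)

/-- The transition kernel of the F-SSEP. -/
def QF (η : X) : Measure X := coin.map (fstep η)

/-! ### SSM dynamics -/

/-- Net rightward particle flow across the bond `⟨k,k+1⟩` given the coin field `α`. -/
def flow (n : XS) (α : ℤ → Bool) (k : ℤ) : ℤ :=
  if 2 ≤ n k then (if 2 ≤ n (k + 1) then (if α k then 1 else -1) else 1)
  else (if 2 ≤ n (k + 1) then -1 else 0)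
/-- One synchronous step of the SSM given the coin field `α`. -/
def sstep (n : XS) (α : ℤ → Bool) : XS := fun i =>
  ((n i : ℤ) + flow n α (i - 1) - flow n α i).toNat

/-- The transition kernel of the SSM. -/
def QS (n : XS) : Measure XS := coin.map (sstep n)

/-! ### Shifts and classes of measures -/

/-- The shift `τ` on sequences of Booleans: `(τη)(i) = η(i-1)`. -/
def shf (η : ℤ → Bool) : ℤ → Bool := fun i => η (i - 1)
/-- The shift `τ` on stack configurations. -/
def shs (n : XS) : XS := fun i => n (i - 1)

/-- Translation-invariant probability measure on `X`. -/
def TIF (μ : Measure X) : Prop := IsProbabilityMeasure μ ∧ μ.map shf = μ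
/-- Translation-invariant stationary state of the F-SSEP. -/
def TISF (μ : Measure X) : Prop := TIF μ ∧ μ.bind QF = μ
/-- Ergodic translation-invariant measure on `X` (extreme point of the TI measures). -/
def ErgF (μ : Measure X) : Prop := TIF μ ∧ ∀ μ₁ μ₂ : Measure X, TIF μ₁ → TIF μ₂ →
  ∀ p : ℝ≥0∞, 0 < p → p < 1 → μ = p • μ₁ + (1 - p) • μ₂ → μ₁ = μ
/-- Extremal translation-invariant stationary state of the F-SSEP. -/
def ETISF (μ : Measure X) : Prop := TISF μ ∧ ∀ μ₁ μ₂ : Measure X, TISF μ₁ → TISF μ₂ →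
  ∀ p : ℝ≥0∞, 0 < p → p < 1 → μ = p • μ₁ + (1 - p) • μ₂ → μ₁ = μ
/-- A measure on `X` is regular if the all-ones configuration carries no mass. -/
def RegF (μ : Measure X) : Prop := μ {η : X | ∀ i, η i = true} = 0

/-- Translation-invariant probability measure on `X̂`. -/
def TI_S (μ : Measure XS) : Prop := IsProbabilityMeasure μ ∧ μ.map shs = μ
/-- Translation-invariant stationary state of the SSM. -/
def TIS_S (μ : Measure XS) : Prop := TI_S μ ∧ μ.bind QS = μ
/-- Ergodic translation-invariant measure on `X̂`. -/
def Erg_S (μ : Measure XS) : Prop := TI_S μ ∧ ∀ μ₁ μ₂ : Measure XS, TI_S μ₁ → TI_S μ₂ →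
  ∀ p : ℝ≥0∞, 0 < p → p < 1 → μ = p • μ₁ + (1 - p) • μ₂ → μ₁ = μ
/-- Extremal translation-invariant stationary state of the SSM. -/
def ETIS_S (μ : Measure XS) : Prop := TIS_S μ ∧ ∀ μ₁ μ₂ : Measure XS, TIS_S μ₁ → TIS_S μ₂ →
  ∀ p : ℝ≥0∞, 0 < p → p < 1 → μ = p • μ₁ + (1 - p) • μ₂ → μ₁ = μ
/-- A measure on `X̂` is regular if the expected stack height at the origin is finite. -/
def Reg_S (μ : Measure XS) : Prop := ∫⁻ n, (n 0 : ℝ≥0∞) ∂μ ≠ ⊤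

/-! ### Densities -/

/-- `μ` has density `ρ`: a.s. both one-sided Cesàro averages of the configuration equal `ρ`. -/
def densF (μ : Measure X) (ρ : ℝ) : Prop :=
  ∀ᵐ η ∂μ,
    Tendsto (fun N : ℕ => (∑ i ∈ Finset.range N, (if η ((i : ℤ) + 1) then (1:ℝ) else 0)) / (N : ℝ))
      atTop (nhds ρ) ∧
    Tendsto (fun N : ℕ => (∑ i ∈ Finset.range N, (if η (-(i : ℤ) - 1) then (1:ℝ) else 0)) / (N : ℝ))
      atTop (nhds ρ)

/-- `μ` has density `ρ̂`: a.s. both one-sided Cesàro averages of the stack heights equal `ρ̂`. -/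
def densS (μ : Measure XS) (ρ : ℝ) : Prop :=
  ∀ᵐ n ∂μ,
    Tendsto (fun N : ℕ => (∑ i ∈ Finset.range N, (n ((i : ℤ) + 1) : ℝ)) / (N : ℝ)) atTop (nhds ρ) ∧
    Tendsto (fun N : ℕ => (∑ i ∈ Finset.range N, (n (-(i : ℤ) - 1) : ℝ)) / (N : ℝ)) atTop (nhds ρ)

/-! ### Special sets of configurations -/

/-- Frozen F-SSEP configurations: no two adjacent occupied sites. -/
def frozenF : Set X := {η | ∀ i : ℤ, η i = false ∨ η (i + 1) = false}
/-- Frozen SSM configurations: every stack has height `0` or `1`. -/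
def frozenS : Set XS := {n | ∀ i : ℤ, n i ≤ 1}
/-- `X̂*`: no two adjacent short stacks. -/
def XstarS : Set XS := {n | ∀ i : ℤ, ¬(n i ≤ 1 ∧ n (i + 1) ≤ 1)}
/-- The even sector `X̂*_e`: all heights even, no two adjacent zeros. -/
def XeS : Set XS := {n | (∀ i : ℤ, Even (n i)) ∧ ∀ i : ℤ, ¬(n i = 0 ∧ n (i + 1) = 0)}
/-- `H = φ(X̂*)`: the F-SSEP configurations containing none of `000`, `0100`, `0010`, `01010`. -/
def Hset : Set X := {η | ∀ i : ℤ,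
  ¬(η i = false ∧ η (i+1) = false ∧ η (i+2) = false) ∧
  ¬(η i = false ∧ η (i+1) = true ∧ η (i+2) = false ∧ η (i+3) = false) ∧
  ¬(η i = false ∧ η (i+1) = false ∧ η (i+2) = true ∧ η (i+3) = false) ∧
  ¬(η i = false ∧ η (i+1) = true ∧ η (i+2) = false ∧ η (i+3) = true ∧ η (i+4) = false)}

/-- The height profile `h_η`, with `h_η(0) = 0` and increments `(-1)^{η(k)}`. -/
def hgt (η : X) (k : ℤ) : ℤ :=
  (∑ i ∈ Finset.Icc (1:ℤ) k, (if η i then (-1:ℤ) else 1)) -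
    (∑ i ∈ Finset.Icc (k + 1) (0:ℤ), (if η i then (-1:ℤ) else 1))

/-! ### The stationary path measure -/

/-- Finite-dimensional distributions of the stationary F-SSEP Markov chain started from `μ`. -/
def chain (μ : Measure X) : (n : ℕ) → Measure (Fin (n + 1) → X)
  | 0 => μ.map (fun η _ => η)
  | (n + 1) => (chain μ n).bind
      (fun path => (QF (path (Fin.last n))).map (fun η' => Fin.snoc path η'))

/-- `P` is the two-sided stationary path measure of the F-SSEP with one-time marginal `μ`. -/
def IsPathMeasure (μ : Measure X) (P : Measure (ℤ → X)) : Prop :=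
  IsProbabilityMeasure P ∧ ∀ (t : ℤ) (n : ℕ),
    P.map (fun ξ (k : Fin (n + 1)) => ξ (t + ((k : ℕ) : ℤ))) = chain μ n

/-! ### Bernoulli initial states and the time evolution -/

/-- An i.i.d. family of uniform `[0,1]` random variables extracted from a single uniform. -/
def unif01 (x : ℝ) (i : ℤ) : ℝ :=
  ∑' k : ℕ, if rbit (Nat.pair (Encodable.encode i) k) x then ((2:ℝ) ^ (k + 1))⁻¹ else 0

/-- The Bernoulli product measure of density `ρ` on `X`. -/
def bernoulliProd (ρ : ℝ) : Measure X :=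
  (volume.restrict (Set.Ioo (0:ℝ) 1)).map (fun x (i : ℤ) => decide (unif01 x i < ρ))

/-- `iterF μ t = μ Q^t`, the state at time `t` of the F-SSEP started from `μ`. -/
def iterF (μ : Measure X) : ℕ → Measure X
  | 0 => μ
  | (t + 1) => (iterF μ t).bind QF

/-- `S_η`: the sites `i` with `η(i-2) = η(i-1) = η(i) = 0`. -/
def Sset (η : X) : Set ℤ := {i | η (i - 2) = false ∧ η (i - 1) = false ∧ η i = false}

/-- The event that `t 0 < t 1 < ⋯ < t m` are consecutive points of `S_η`. -/
def renewEvent (t : ℕ → ℤ) (m : ℕ) : Set X :=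
  {η | (∀ j ≤ m, t j ∈ Sset η) ∧ ∀ x : ℤ, t 0 ≤ x → x ≤ t m → x ∈ Sset η → ∃ j ≤ m, t j = x}

/-! ### Substitution subshifts -/

/-- The smallest translation-invariant subset of `X` containing all configurations obtained
by the letterwise substitution `b ↦ w b`. -/
def substSet (w : Bool → List Bool) : Set X :=
  {η | ∃ (ζ : ℤ → Bool) (K : ℤ → ℤ),
    (∀ i : ℤ, K (i + 1) = K i + (w (ζ i)).length) ∧
    ∀ (i : ℤ) (j : ℕ) (h : j < (w (ζ i)).length), η (K i + (j : ℤ)) = (w (ζ i)).get ⟨j, h⟩}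

/-- The substitution `1 → 1100`, `0 → 10`. -/
def wLeft : Bool → List Bool := fun b => if b then [true, true, false, false] else [true, false]
/-- The substitution `1 → 0011`, `0 → 01`. -/
def wRight : Bool → List Bool := fun b => if b then [false, false, true, true] else [false, true]

/-- `X_left`. -/
def Xleft : Set X := substSet wLeft
/-- `X_right`. -/
def Xright : Set X := substSet wRight

/-- `X̂_left`: heights at most 2, a 2 is followed by a 0, a 0 is preceded by a 2. -/
def XSleft : Set XS :=
  {n | ∀ i : ℤ, n i ≤ 2 ∧ (n i = 2 → n (i + 1) = 0) ∧ (n i = 0 → n (i - 1) = 2)}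
/-- `X̂_right`: the spatial reflection of `X̂_left`. -/
def XSright : Set XS :=
  {n | ∀ i : ℤ, n i ≤ 2 ∧ (n i = 2 → n (i - 1) = 0) ∧ (n i = 0 → n (i + 1) = 2)}

/-! ### Ring measures and the grand canonical limit -/

/-- Admissible even ring configurations: all heights even, no two cyclically adjacent zeros. -/
def ringOK (L : ℕ) (n : ZMod (2 * L + 1) → ℕ) : Prop :=
  (∀ i, Even (n i)) ∧ ∀ i, ¬(n i = 0 ∧ n (i + 1) = 0)

/-- The grand canonical weight `ζ^{Σ n(i)} 4^{-z(n)}` of an admissible ring configuration. -/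
def ringW (ζ : ℝ) (L : ℕ) (n : ZMod (2 * L + 1) → ℕ) : ℝ≥0∞ :=
  if ringOK L n then
    (ENNReal.ofReal ζ) ^ (∑ i, n i) *
      ((4 : ℝ≥0∞) ^ (Finset.univ.filter (fun i => n i = 0)).card)⁻¹
  else 0

/-- The grand canonical measure `μ^(ζ,L)` on the ring of `2L+1` sites. -/
def muRing (ζ : ℝ) (L : ℕ) : Measure (ZMod (2 * L + 1) → ℕ) :=
  (∑' n, ringW ζ L n)⁻¹ • Measure.sum (fun n => ringW ζ L n • Measure.dirac n)

/-- The cylinder set in the ring determined by `m` on the window `[-K,K]`. -/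
def ringCyl (L K : ℕ) (m : ℤ → ℕ) : Set (ZMod (2 * L + 1) → ℕ) :=
  {n | ∀ i ∈ Finset.Icc (-(K : ℤ)) (K : ℤ), n ((i : ℤ) : ZMod (2 * L + 1)) = m i}

/-- The cylinder set in `X̂` determined by `m` on the window `[-K,K]`. -/
def cylS (K : ℕ) (m : ℤ → ℕ) : Set XS := {n | ∀ i ∈ Finset.Icc (-(K : ℤ)) (K : ℤ), n i = m i}

/-- `μ` is the weak limit `μ^(ζ,∞) = lim_L μ^(ζ,L)` (all cylinder probabilities converge). -/
def IsGCLimit (ζ : ℝ) (μ : Measure XS) : Prop :=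
  IsProbabilityMeasure μ ∧ ∀ (K : ℕ) (m : ℤ → ℕ),
    Tendsto (fun L : ℕ => muRing ζ L (ringCyl L K m)) atTop (nhds (μ (cylS K m)))

/-- `μ̂^(2)`: equal masses on the two configurations with alternating heights `0` and `2`. -/
def muHat2 : Measure XS :=
  (2 : ℝ≥0∞)⁻¹ • Measure.dirac (fun i : ℤ => if Even i then 2 else 0) +
    (2 : ℝ≥0∞)⁻¹ • Measure.dirac (fun i : ℤ => if Even i then 0 else 2)

/-- Mixing under the shift. -/
def MixingS (μ : Measure XS) : Prop :=
  ∀ A B : Set XS, MeasurableSet A → MeasurableSet B →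
    Tendsto (fun k : ℕ => μ (A ∩ shs^[k] ⁻¹' B)) atTop (nhds (μ A * μ B))

/-- Weak mixing under the shift. -/
def WeakMixS (μ : Measure XS) : Prop :=
  ∀ A B : Set XS, MeasurableSet A → MeasurableSet B →
    Tendsto (fun N : ℕ =>
      (∑ k ∈ Finset.range N,
        |(μ (A ∩ shs^[k] ⁻¹' B)).toReal - (μ A).toReal * (μ B).toReal|) / (N : ℝ))
      atTop (nhds 0)

/-- The Gibbs weight of `m` on the window `[a,b]`, for fugacity `ζ` and the one-body
potential `V(n) = 2 ln 2 · δ_{n,0}` (so `e^{-V(0)} = 1/4`). -/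
def gibbsW (ζ : ℝ) (a b : ℤ) (m : XS) : ℝ≥0∞ :=
  (ENNReal.ofReal ζ) ^ (∑ i ∈ Finset.Icc a b, m i) *
    ((4 : ℝ≥0∞) ^ ((Finset.Icc a b).filter (fun i => m i = 0)).card)⁻¹

/-- `μ` is a Gibbs state for fugacity `ζ` and one-body potential `V(n) = 2 ln 2 · δ_{n,0}`,
together with the hard constraints defining `X̂*_e` (DLR ratio condition). -/
def IsGibbsV (ζ : ℝ) (μ : Measure XS) : Prop :=
  μ XeSᶜ = 0 ∧ ∀ a b : ℤ, a ≤ b → ∀ m m' : XS, m ∈ XeS → m' ∈ XeS →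
    (∀ i : ℤ, i < a ∨ b < i → m i = m' i) →
    μ {n : XS | ∀ i ∈ Finset.Icc (a - 1) (b + 1), n i = m i} * gibbsW ζ a b m' =
      μ {n : XS | ∀ i ∈ Finset.Icc (a - 1) (b + 1), n i = m' i} * gibbsW ζ a b m

/-! ### The parity decomposition -/

/-- `γ(m,σ) = m + σ`. -/
def gam (p : XS × PS) : XS := fun i => p.1 i + (if p.2 i then 1 else 0)
/-- The inverse of `γ` (on `X̂*`): split a configuration into even part and parity. -/
def gamInv (n : XS) : XS × PS := (fun i => n i - n i % 2, fun i => decide (n i % 2 = 1))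
/-- Diagonal shift on `X̂ × S`. -/
def shP (p : XS × PS) : XS × PS := (shs p.1, shf p.2)
/-- The SSM dynamics acting on the first factor of `X̂ × S` and trivially on the second. -/
def QP (p : XS × PS) : Measure (XS × PS) := (QS p.1).map (fun m => (m, p.2))

/-- TIS state on `X̂*_e × S`. -/
def TIS_P (ν : Measure (XS × PS)) : Prop :=
  IsProbabilityMeasure ν ∧ ν.map shP = ν ∧ ν.bind QP = ν ∧ ν {p : XS × PS | p.1 ∉ XeS} = 0
/-- ETIS state on `X̂*_e × S`. -/
def ETIS_P (ν : Measure (XS × PS)) : Prop :=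
  TIS_P ν ∧ ∀ ν₁ ν₂ : Measure (XS × PS), TIS_P ν₁ → TIS_P ν₂ →
    ∀ p : ℝ≥0∞, 0 < p → p < 1 → ν = p • ν₁ + (1 - p) • ν₂ → ν₁ = ν

/-! ### The substitution bijection `Φ_φ` -/

/-- The starting position of the word substituted for the `i`-th letter (word `1` starts
at site `1`, and the word for `n(i)` is `0 1^{n(i)}`, of length `n(i) + 1`). -/
def Kst (n : XS) (i : ℤ) : ℤ :=
  1 + (∑ j ∈ Finset.Icc (1:ℤ) (i - 1), ((n j : ℤ) + 1)) -
    (∑ j ∈ Finset.Icc i (0:ℤ), ((n j : ℤ) + 1))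

/-- The substitution map `φ : X̂ → X`, replacing each height `n(i)` by `0 1^{n(i)}`. -/
def phiSub (n : XS) : X := fun x => if ∃ i : ℤ, Kst n i = x then false else true

/-- The normalization `Z_ν = Σ (k+1) ν({n(1) = k})`. -/
def Zsub (ν : Measure XS) : ℝ≥0∞ := ∑' k : ℕ, ((k : ℝ≥0∞) + 1) * ν {n : XS | n 1 = k}

/-- The bijection `Φ_φ` on regular TI measures induced by the substitution `φ`. -/
def Phi (ν : Measure XS) : Measure X :=
  (Zsub ν)⁻¹ • Measure.sum (fun p : (Σ k : ℕ, Fin (k + 1)) =>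
    (ν.restrict {n : XS | n 1 = p.1}).map (fun n (x : ℤ) => phiSub n (x + ((p.2 : ℕ) : ℤ))))

/-! ### Basic states -/

/-- The image `τ(A)` of a set of parity sequences under the shift. -/
def shiftSetP (A : Set PS) : Set PS := {σ | (fun i => σ (i + 1)) ∈ A}

/-- Cyclic successor in `Fin m`. -/
def finCycSucc {m : ℕ} (k : Fin m) : Fin m := ⟨(k.val + 1) % m, Nat.mod_lt _ k.pos⟩

/-- A `(λ,m)`-partition of `S`: pairwise disjoint, covering, cyclically permuted by the
shift (all modulo `λ`-null sets). -/
def IsCycPartition (lam : Measure PS) (m : ℕ) (A : Fin m → Set PS) : Prop :=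
  lam (⋃ k, A k)ᶜ = 0 ∧ (∀ k l, k ≠ l → lam (A k ∩ A l) = 0) ∧
    ∀ k, lam ((shiftSetP (A k) \ A (finCycSucc k)) ∪ (A (finCycSucc k) \ shiftSetP (A k))) = 0

/-- `ν^(q) = q⁻¹ Σ_{i<q} τ^{im}_* ν`. -/
def nuQ (ν : Measure XS) (q m : ℕ) : Measure XS :=
  ((q : ℝ≥0∞))⁻¹ • Measure.sum (fun i : Fin q => ν.map (shs^[(i : ℕ) * m]))

/-- The measure `μ̃^(λ,ν,A)` on `X̂*_e × S`, with `μ_σ = τ^k_* ν^(q)` for `σ ∈ A_k`. -/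
def mutilde (lam : Measure PS) (ν : Measure XS) (q m : ℕ) (A : Fin m → Set PS) :
    Measure (XS × PS) :=
  Measure.sum (fun k : Fin m => (((nuQ ν q m).map (shs^[(k : ℕ)])).prod (lam.restrict (A k))))

/-- `N_{ρ̂_e}`: stationary probability measures of the SSM supported on `X̂*_e` of
density `ρ̂_e` (not necessarily translation invariant). -/
def Nset (ρe : ℝ) : Set (Measure XS) :=
  {ν | IsProbabilityMeasure ν ∧ ν.bind QS = ν ∧ ν XeSᶜ = 0 ∧ densS ν ρe}

/-- `N̄_{ρ̂_e}`: the extreme points of `N_{ρ̂_e}`. -/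
def NExt (ρe : ℝ) : Set (Measure XS) :=
  {ν | ν ∈ Nset ρe ∧ ∀ ν₁ ν₂ : Measure XS, ν₁ ∈ Nset ρe → ν₂ ∈ Nset ρe →
    ∀ p : ℝ≥0∞, 0 < p → p < 1 → ν = p • ν₁ + (1 - p) • ν₂ → ν₁ = ν}

/-- `A'` is a proper refinement of `A` (modulo `λ`-null sets). -/
def ProperRefines (lam : Measure PS) {m m' : ℕ} (A' : Fin m' → Set PS) (A : Fin m → Set PS) :
    Prop :=
  m < m' ∧ ∀ j : Fin m', ∃ k : Fin m, lam (A' j \ A k) = 0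

/-- `μ` is an irreducible basic state of the SSM on `X̂*`. -/
def IsIrreducibleBasic (μ : Measure XS) : Prop :=
  ∃ (lam : Measure PS) (ρe : ℝ) (ν : Measure XS) (n m q : ℕ) (A : Fin m → Set PS),
    ErgF lam ∧ 1 ≤ ρe ∧ ν ∈ NExt ρe ∧
    0 < n ∧ ν.map (shs^[n]) = ν ∧ (∀ j : ℕ, 0 < j → j < n → ν.map (shs^[j]) ≠ ν) ∧
    n = q * m ∧ IsCycPartition lam m A ∧
    (¬ ∃ (m' : ℕ) (A' : Fin m' → Set PS),
      m' ∣ n ∧ IsCycPartition lam m' A' ∧ ProperRefines lam A' A) ∧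
    μ = (mutilde lam ν q m A).map gam


/-!
If site `i` stays empty forever, a particle that ever lands next to it is stuck there: it cannot
jump into `i`, and the site beyond it stays empty, since an occupied pair pointing at `i` would
fill `i`. Repeating the argument outward, along almost every path each finite window around `i`
eventually contains no two adjacent particles. As the one-time marginal of `P` is `μ` at every
time, the event has probability at most `μ` of each such window event, hence at most `μ(F) = 0`.

If `i, i+1` stay occupied forever, the occupied block containing them grows. Whenever the site
just outside the block is empty, the edge particle of the block wants to jump into it and stays
only if a particle from the other side competes for that site and wins the coin toss, which has
probability `r < 1`. A supermartingale argument shows that almost surely the block is not kept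
while the outside site is empty infinitely often. So every finite window is eventually completely
occupied, and regularity of `μ` gives probability `0`.

An interval with two sites contains an adjacent pair, which is either `11` or has an empty site.
-/

open Set

instance : IsProbabilityMeasure (volume.restrict (Ioo (0 : ℝ) 1)) :=
  ⟨by rw [Measure.restrict_apply_univ, Real.volume_Ioo]; norm_num⟩

lemma measurableSet_coord {ι : Type*} (i : ι) (b : Bool) :
    MeasurableSet {f : ι → Bool | f i = b} :=
  show MeasurableSet ((fun f : ι → Bool => f i) ⁻¹' {b}) from
    measurable_pi_apply i (measurableSet_singleton b)

lemma measurable_coinField : Measurable fun x (i : ℤ) => rbit (Encodable.encode i) x := by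
  refine measurable_pi_lambda _ fun i => measurable_to_countable' fun b => ?_
  have : rbit (Encodable.encode i) ⁻¹' {b} =
      (fun x : ℝ => ⌊x * 2 ^ (Encodable.encode i + 1)⌋) ⁻¹' {k | decide (k % 2 = 1) = b} := rfl
  rw [this]
  exact (Int.measurable_floor.comp (measurable_id.mul_const _)) trivial

instance : IsProbabilityMeasure coin :=
  Measure.isProbabilityMeasure_map measurable_coinField.aemeasurable

lemma coin_coord_pos (h : ℤ) (b : Bool) : 0 < coin {α | α h = b} := by
  set N : ℝ := 2 ^ (Encodable.encode h + 1)
  have hN : 2 ≤ N := le_self_pow₀ (by norm_num) (by omega)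
  set k : ℤ := if b then 1 else 0
  have hk₀ : (0 : ℝ) ≤ k := by unfold k; split <;> norm_num
  have hk₁ : (k : ℝ) ≤ 1 := by unfold k; split <;> norm_num
  -- `α h` is the parity of `⌊x * N⌋`, which equals `k` on this interval
  have hsub : Ioo (k / N) ((k + 1) / N) ⊆
      (fun x (i : ℤ) => rbit (Encodable.encode i) x) ⁻¹' {α | α h = b} ∩ Ioo 0 1 := by
    intro x ⟨hx₁, hx₂⟩
    rw [div_lt_iff₀ (by positivity)] at hx₁
    rw [lt_div_iff₀ (by positivity)] at hx₂
    have hfloor : ⌊x * N⌋ = k := Int.floor_eq_iff.2 ⟨hx₁.le, hx₂⟩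
    refine ⟨?_, by nlinarith, by nlinarith⟩
    show rbit _ x = b
    rw [rbit, hfloor]
    cases b <;> decide
  calc (0 : ℝ≥0∞) < volume (Ioo (k / N) ((k + 1) / N)) := by
        rw [Real.volume_Ioo, ENNReal.ofReal_pos, ← sub_div, add_sub_cancel_left]
        positivity
    _ ≤ coin {α | α h = b} := by
        rw [coin, Measure.map_apply measurable_coinField (measurableSet_coord h b),
          Measure.restrict_apply (measurable_coinField (measurableSet_coord h b))]
        exact measure_mono hsub

lemma coin_coord_lt_one (h : ℤ) (b : Bool) : coin {α | α h = b} < 1 := by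
  have hcompl : {α : ℤ → Bool | α h = b} = {α | α h = !b}ᶜ := by ext α; cases b <;> simp
  rw [hcompl, prob_compl_eq_one_sub (measurableSet_coord h _)]
  exact ENNReal.sub_lt_self ENNReal.one_ne_top one_ne_zero (coin_coord_pos h _).ne'

lemma measurable_fstep_uncurry : Measurable fun q : X × (ℤ → Bool) => fstep q.1 q.2 := by
  unfold fstep jumpsR jumpsL wantsR wantsL
  fun_prop

lemma measurable_fstep (η : X) : Measurable (fstep η) :=
  measurable_fstep_uncurry.comp measurable_prodMk_left

lemma QF_apply (η : X) {s : Set X} (hs : MeasurableSet s) : QF η s = coin (fstep η ⁻¹' s) :=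
  Measure.map_apply (measurable_fstep η) hs

instance (η : X) : IsProbabilityMeasure (QF η) :=
  Measure.isProbabilityMeasure_map (measurable_fstep η).aemeasurable

section Chain

variable {μ : Measure X} {n : ℕ}

lemma measurable_snoc :
    Measurable fun q : (Fin (n + 1) → X) × X => (Fin.snoc q.1 q.2 : Fin (n + 2) → X) := by
  refine measurable_pi_lambda _ fun k => ?_
  induction k using Fin.lastCases with
  | last => simpa using measurable_snd
  | cast j => simp only [Fin.snoc_castSucc]; fun_prop

lemma measurable_snoc_fstep (p : Fin (n + 1) → X) :
    Measurable fun α => (Fin.snoc p (fstep (p (Fin.last n)) α) : Fin (n + 2) → X) :=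
  measurable_snoc.comp (measurable_const.prodMk (measurable_fstep _))

def extendWindow (p : Fin (n + 1) → X) : Measure (Fin (n + 2) → X) :=
  coin.map fun α => Fin.snoc p (fstep (p (Fin.last n)) α)

lemma measurable_extendWindow : Measurable (extendWindow (n := n)) := by
  let G : (Fin (n + 1) → X) × (ℤ → Bool) → (Fin (n + 2) → X) :=
    fun q => Fin.snoc q.1 (fstep (q.1 (Fin.last n)) q.2)
  have hG : Measurable G := measurable_snoc.comp <| measurable_fst.prodMk <|
    measurable_fstep_uncurry.comp <|
      ((measurable_pi_apply _).comp measurable_fst).prodMk measurable_snd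
  have : extendWindow (n := n) = fun p => (coin.map (Prod.mk p)).map G := by
    funext p
    rw [Measure.map_map hG measurable_prodMk_left]
    rfl
  rw [this]
  exact (Measure.measurable_map G hG).comp Measurable.map_prodMk_left

lemma chain_succ : chain μ (n + 1) = (chain μ n).bind extendWindow := by
  rw [chain]
  congr
  funext p
  have hsnoc : Measurable fun η : X => (Fin.snoc p η : Fin (n + 2) → X) :=
    measurable_snoc.comp measurable_prodMk_left
  rw [QF, Measure.map_map hsnoc (measurable_fstep _)]
  rfl

end Chain

def window (t : ℤ) (n : ℕ) (ξ : ℤ → X) : Fin (n + 1) → X := fun k => ξ (t + k)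

lemma measurable_window (t : ℤ) (n : ℕ) : Measurable (window t n) :=
  measurable_pi_lambda _ fun _ => measurable_pi_apply _

namespace IsPathMeasure

variable {μ : Measure X} {P : Measure (ℤ → X)}

lemma measure_window_preimage (hP : IsPathMeasure μ P) (t : ℤ) (n : ℕ)
    {S : Set (Fin (n + 1) → X)} (hS : MeasurableSet S) :
    P (window t n ⁻¹' S) = chain μ n S := by
  rw [← Measure.map_apply (measurable_window t n) hS]
  exact congrArg (· S) (hP.2 t n)

lemma measure_eval_mem (hP : IsPathMeasure μ P) (t : ℤ) {A : Set X} (hA : MeasurableSet A) :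
    P {ξ | ξ t ∈ A} = μ A := by
  have := hP.measure_window_preimage t 0 (measurable_pi_apply 0 hA)
  rw [chain, Measure.map_apply (by fun_prop) (measurable_pi_apply 0 hA)] at this
  convert this using 2
  · ext ξ
    simp [window]
  · rfl

lemma isProbabilityMeasure_marginal (hP : IsPathMeasure μ P) : IsProbabilityMeasure μ := by
  have := hP.1
  constructor
  simpa using (hP.measure_eval_mem 0 MeasurableSet.univ).symm

lemma measure_eventually_mem_le (hP : IsPathMeasure μ P) {C : Set X} (hC : MeasurableSet C) :
    P {ξ | ∀ᶠ t in atTop, ξ t ∈ C} ≤ μ C := by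
  have hmono : Monotone fun T : ℤ => {ξ : ℤ → X | ∀ t ≥ T, ξ t ∈ C} :=
    fun T T' hT ξ hξ t ht => hξ t (hT.trans ht)
  rw [show {ξ : ℤ → X | ∀ᶠ t in atTop, ξ t ∈ C} = ⋃ T : ℤ, {ξ | ∀ t ≥ T, ξ t ∈ C} by
    ext; simp [eventually_atTop], hmono.measure_iUnion]
  refine iSup_le fun T => ?_
  calc P {ξ | ∀ t ≥ T, ξ t ∈ C} ≤ P {ξ | ξ T ∈ C} := measure_mono fun ξ hξ => hξ T le_rfl
    _ = μ C := hP.measure_eval_mem T hC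

lemma measure_le_of_ae_eventually_mem (hP : IsPathMeasure μ P) {C : ℕ → Set X}
    (hC : ∀ k, MeasurableSet (C k)) (hanti : Antitone C) {E : Set (ℤ → X)}
    (hE : ∀ k, ∀ᵐ ξ ∂P, ξ ∈ E → ∀ᶠ t in atTop, ξ t ∈ C k) :
    P E ≤ μ (⋂ k, C k) := by
  have := hP.isProbabilityMeasure_marginal
  rw [hanti.measure_iInter (fun k => (hC k).nullMeasurableSet) ⟨0, measure_ne_top _ _⟩]
  exact le_iInf fun k => (measure_mono_ae (hE k)).trans (hP.measure_eventually_mem_le (hC k))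

lemma ae_forall_step (hP : IsPathMeasure μ P) {R : X → X → Prop}
    (hR : MeasurableSet {p : Fin 2 → X | R (p 0) (p 1)}) (h : ∀ η α, R η (fstep η α)) :
    ∀ᵐ ξ ∂P, ∀ t, R (ξ t) (ξ (t + 1)) := by
  refine ae_all_iff.2 fun t => ?_
  have hnull : chain μ 1 {p | R (p 0) (p 1)}ᶜ = 0 := by
    rw [chain_succ, Measure.bind_apply hR.compl measurable_extendWindow.aemeasurable]
    have hzero (p : Fin 1 → X) : extendWindow p {p | R (p 0) (p 1)}ᶜ = 0 := by
      rw [extendWindow, Measure.map_apply (measurable_snoc_fstep p) hR.compl]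
      convert measure_empty (μ := coin)
      ext α
      simp only [Set.mem_preimage, Set.mem_compl_iff, Set.mem_empty_iff_false, iff_false,
        not_not]
      exact h _ α
    simp [hzero]
  rw [ae_iff, ← hnull, ← hP.measure_window_preimage t 1 hR.compl]
  congr 1
  ext ξ
  simp [window]

end IsPathMeasure

lemma exists_le_count_of_frequently {q : ℤ → Prop} (hq : ∃ᶠ t in atTop, q t) (T : ℤ) (m : ℕ) :
    ∃ n, m ≤ Nat.count (fun s => q (T + s)) n := by
  have hinf : {s : ℕ | q (T + s)}.Infinite := by
    refine Set.infinite_of_not_bddAbove fun ⟨N, hN⟩ => ?_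
    obtain ⟨t, ht, hqt⟩ := frequently_atTop.1 hq (T + N + 1)
    have : (t - T).toNat ≤ N := hN <| show q (T + (t - T).toNat) by
      rwa [show T + (t - T).toNat = t by omega]
    omega
  exact ⟨Nat.nth _ m, (Nat.count_nth_of_infinite hinf m).ge⟩

section Supermartingale

variable {μ : Measure X} {B H : Set X} {r : ℝ≥0∞} {n : ℕ}

def holeCount (H : Set X) (n : ℕ) (p : Fin (n + 1) → X) : ℕ :=
  ∑ s : Fin n, if p s.castSucc ∈ H then 1 else 0

lemma holeCount_snoc (p : Fin (n + 1) → X) (η : X) :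
    holeCount H (n + 1) (Fin.snoc p η) =
      holeCount H n p + if p (Fin.last n) ∈ H then 1 else 0 := by
  simp only [holeCount, Fin.snoc_castSucc]
  exact Fin.sum_univ_castSucc _

lemma holeCount_window (T : ℤ) (ξ : ℤ → X) :
    holeCount H n (window T n ξ) = Nat.count (fun s => ξ (T + s) ∈ H) n := by
  simp only [holeCount, window, Fin.val_castSucc, Nat.count_eq_card_filter_range,
    Finset.card_filter]
  exact Fin.sum_univ_eq_sum_range (fun s => if ξ (T + s) ∈ H then 1 else 0) n

lemma measurable_holeCount (hH : MeasurableSet H) : Measurable (holeCount H n) :=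
  Finset.measurable_sum _ fun _ _ =>
    Measurable.ite (hH.preimage (measurable_pi_apply _)) measurable_const measurable_const

lemma measurableSet_forall_mem (hB : MeasurableSet B) :
    MeasurableSet {p : Fin (n + 1) → X | ∀ s, p s ∈ B} := by
  rw [Set.ofPred_forall]
  exact MeasurableSet.iInter fun s => hB.preimage (measurable_pi_apply s)

/-- Each visit to `H` inside `B` multiplies the weight by `r⁻¹`, which compensates the
probability at most `r` of staying in `B`; so this is a supermartingale along the chain. -/
def holeWeight (B H : Set X) (r : ℝ≥0∞) (n : ℕ) (p : Fin (n + 1) → X) : ℝ≥0∞ :=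
  if ∀ s, p s ∈ B then r⁻¹ ^ holeCount H n p else 0

lemma measurable_holeWeight (hB : MeasurableSet B) (hH : MeasurableSet H) :
    Measurable (holeWeight B H r n) :=
  Measurable.ite (measurableSet_forall_mem hB)
    ((measurable_from_nat (f := (r⁻¹ ^ ·))).comp (measurable_holeCount hH)) measurable_const

lemma holeWeight_snoc (p : Fin (n + 1) → X) (η : X) :
    holeWeight B H r (n + 1) (Fin.snoc p η) =
      holeWeight B H r n p * B.indicator (fun _ => if p (Fin.last n) ∈ H then r⁻¹ else 1) η := by
  by_cases hp : ∀ s, p s ∈ B <;> by_cases hη : η ∈ B <;> by_cases hH : p (Fin.last n) ∈ H <;>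
    simp [holeWeight, Fin.forall_fin_succ', holeCount_snoc, pow_succ, hp, hη, hH]

lemma lintegral_holeWeight_le_one (hμ : IsProbabilityMeasure μ) (hB : MeasurableSet B)
    (hH : MeasurableSet H) (hr₀ : r ≠ 0) (hr : r ≠ ⊤) (hstep : ∀ η ∈ B, η ∈ H → QF η B ≤ r)
    (n : ℕ) : ∫⁻ p, holeWeight B H r n p ∂chain μ n ≤ 1 := by
  induction n with
  | zero =>
    have : IsProbabilityMeasure (chain μ 0) := Measure.isProbabilityMeasure_map
      (by fun_prop : Measurable fun (η : X) (_ : Fin 1) => η).aemeasurable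
    refine (lintegral_mono (g := fun _ => 1) fun p => ?_).trans_eq (by simp)
    simp only [holeWeight, holeCount, Finset.univ_eq_empty, Finset.sum_empty, pow_zero]
    split <;> simp
  | succ n ih =>
    rw [chain_succ, Measure.lintegral_bind measurable_extendWindow.aemeasurable
      (measurable_holeWeight hB hH).aemeasurable]
    refine (lintegral_mono fun p => ?_).trans ih
    rw [extendWindow, lintegral_map (measurable_holeWeight hB hH) (measurable_snoc_fstep p)]
    simp_rw [holeWeight_snoc]
    have hfin : holeWeight B H r n p ≠ ⊤ := by unfold holeWeight; split <;> simp [hr₀]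
    rw [lintegral_const_mul' _ _ hfin, lintegral_indicator_const_comp (measurable_fstep _) hB,
      ← QF_apply _ hB]
    by_cases hp : ∀ s, p s ∈ B
    · refine mul_le_of_le_one_right' ?_
      split_ifs with hH
      · calc r⁻¹ * QF (p (Fin.last n)) B ≤ r⁻¹ * r := by gcongr; exact hstep _ (hp _) hH
          _ = 1 := ENNReal.inv_mul_cancel hr₀ hr
      · simpa using prob_le_one
    · simp [holeWeight, hp]

lemma chain_holeCount_le (hμ : IsProbabilityMeasure μ) (hB : MeasurableSet B)
    (hH : MeasurableSet H) (hr₀ : r ≠ 0) (hr : r ≤ 1) (hstep : ∀ η ∈ B, η ∈ H → QF η B ≤ r)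
    (n m : ℕ) : chain μ n {p | (∀ s, p s ∈ B) ∧ m ≤ holeCount H n p} ≤ r ^ m := by
  have hr' : r ≠ ⊤ := ne_top_of_le_ne_top ENNReal.one_ne_top hr
  have hsub : {p | (∀ s, p s ∈ B) ∧ m ≤ holeCount H n p} ⊆
      {p | r⁻¹ ^ m ≤ holeWeight B H r n p} := fun p ⟨hp, hm⟩ => by
    simpa [holeWeight, hp] using pow_le_pow_right₀ (ENNReal.one_le_inv.2 hr) hm
  have hmarkov := calc
    r⁻¹ ^ m * chain μ n {p | (∀ s, p s ∈ B) ∧ m ≤ holeCount H n p}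
        ≤ r⁻¹ ^ m * chain μ n {p | r⁻¹ ^ m ≤ holeWeight B H r n p} := by gcongr
    _ ≤ ∫⁻ p, holeWeight B H r n p ∂chain μ n :=
        mul_meas_ge_le_lintegral₀ (measurable_holeWeight hB hH).aemeasurable _
    _ ≤ 1 := lintegral_holeWeight_le_one hμ hB hH hr₀ hr' hstep n
  rwa [← ENNReal.inv_pow, ENNReal.inv_mul_le_iff (pow_ne_zero _ hr₀)
    (ENNReal.pow_ne_top hr'), mul_one] at hmarkov

end Supermartingale

namespace IsPathMeasure

variable {μ : Measure X} {P : Measure (ℤ → X)} {B H : Set X} {r : ℝ≥0∞}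

lemma measure_mem_frequently_mem_eq_zero (hP : IsPathMeasure μ P) (hB : MeasurableSet B)
    (hH : MeasurableSet H) (hr₀ : r ≠ 0) (hr : r < 1) (hstep : ∀ η ∈ B, η ∈ H → QF η B ≤ r)
    (T : ℤ) : P ({ξ | ∀ t ≥ T, ξ t ∈ B} ∩ {ξ | ∃ᶠ t in atTop, ξ t ∈ H}) = 0 := by
  refine le_antisymm (ge_of_tendsto' (ENNReal.tendsto_pow_atTop_nhds_zero_of_lt_one hr)
    fun m => ?_) bot_le
  set A : ℕ → Set (ℤ → X) :=
    fun n => {ξ | (∀ t ≥ T, ξ t ∈ B) ∧ m ≤ Nat.count (fun s => ξ (T + s) ∈ H) n}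
  have hA : Monotone A := fun n n' hn ξ ⟨hB, hm⟩ => ⟨hB, hm.trans (Nat.count_monotone _ hn)⟩
  have hS (n : ℕ) :
      MeasurableSet {p : Fin (n + 1) → X | (∀ s, p s ∈ B) ∧ m ≤ holeCount H n p} :=
    (measurableSet_forall_mem hB).inter (measurable_holeCount hH .of_discrete)
  calc _ ≤ P (⋃ n, A n) := measure_mono fun ξ hξ =>
        Set.mem_iUnion.2 ((exists_le_count_of_frequently hξ.2 T m).imp fun _ hn => ⟨hξ.1, hn⟩)
    _ = ⨆ n, P (A n) := hA.measure_iUnion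
    _ ≤ r ^ m := iSup_le fun n => calc
        P (A n) ≤ P (window T n ⁻¹' {p | (∀ s, p s ∈ B) ∧ m ≤ holeCount H n p}) :=
          measure_mono fun ξ ⟨hξB, hm⟩ => show (∀ s, window T n ξ s ∈ B) ∧ _ from
            ⟨fun s => hξB _ (by simp), by rwa [holeCount_window]⟩
      _ = chain μ n {p | (∀ s, p s ∈ B) ∧ m ≤ holeCount H n p} :=
          hP.measure_window_preimage T n (hS n)
      _ ≤ r ^ m := chain_holeCount_le hP.isProbabilityMeasure_marginal hB hH hr₀ hr.le hstep n m

theorem ae_eventually_not_mem (hP : IsPathMeasure μ P) (hB : MeasurableSet B)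
    (hH : MeasurableSet H) (hr : r < 1) (hstep : ∀ η ∈ B, η ∈ H → QF η B ≤ r) :
    ∀ᵐ ξ ∂P, (∀ᶠ t in atTop, ξ t ∈ B) → ∀ᶠ t in atTop, ξ t ∉ H := by
  have hr' : max r 2⁻¹ < 1 := max_lt hr (by norm_num)
  have hstep' : ∀ η ∈ B, η ∈ H → QF η B ≤ max r 2⁻¹ :=
    fun η hη hηH => (hstep η hη hηH).trans (le_max_left _ _)
  rw [ae_iff]
  refine measure_mono_null (fun ξ hξ => ?_) (measure_iUnion_null fun T =>
    hP.measure_mem_frequently_mem_eq_zero hB hH (by simp) hr' hstep' T)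
  simp only [Set.mem_ofPred_eq, Classical.not_imp, not_eventually, not_not] at hξ
  obtain ⟨⟨T, hT⟩, hH⟩ := hξ.imp_left eventually_atTop.1
  exact Set.mem_iUnion.2 ⟨T, hT, hH⟩

end IsPathMeasure

section OneStep

variable {η : X} {α : ℤ → Bool} {j d : ℤ}

lemma fstep_apply (η : X) (α : ℤ → Bool) (i : ℤ) : fstep η α i =
    ((η i
        && !((η i && η (i-1) && !η (i+1)) && (!(η (i+2) && η (i+3) && !η (i+1)) || α (i+1)))
        && !((η i && η (i+1) && !η (i-1)) && (!(η (i-2) && η (i-3) && !η (i-1)) || !(α (i-1)))))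
      || ((η (i-1) && η (i-2) && !η i) && (!(η (i+1) && η (i+2) && !η i) || α i))
      || ((η (i+1) && η (i+2) && !η i) && (!(η (i-1) && η (i-2) && !η i) || !(α i)))) := by
  simp only [fstep, jumpsR, jumpsL, wantsR, wantsL, show i - 1 - 1 = i - 2 by ring,
    show i - 1 + 1 = i by ring, show i - 1 + 2 = i + 1 by ring, show i + 1 - 1 = i by ring,
    show i + 1 + 1 = i + 2 by ring, show i + 2 + 1 = i + 3 by ring,
    show i + 2 - 1 = i + 1 by ring, show i - 2 - 1 = i - 3 by ring,
    show i - 2 + 1 = i - 1 by ring, show i + 1 - 2 = i - 1 by ring]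

lemma fstep_apply_of_isolated (h₀ : η (j - 1) = false) (h₁ : η j = true)
    (h₂ : η (j + 1) = false) : fstep η α j = true := by
  simp [fstep_apply, h₀, h₁, h₂]

/-- An occupied pair pointing at an empty site always fills it: if two such pairs compete, the
coin lets exactly one of them in. -/
lemma eq_false_or_eq_false_of_fstep_eq_false (hd : d = 1 ∨ d = -1) (h₀ : η j = false)
    (h₁ : fstep η α j = false) : η (j + d) = false ∨ η (j + 2 * d) = false := by
  rw [fstep_apply, h₀] at h₁
  rcases hd with rfl | rfl <;>
    simp only [mul_one, show j + -1 = j - 1 by ring, show j + 2 * -1 = j - 2 by ring] <;>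
    revert h₁ <;>
    cases η (j + 1) <;> cases η (j + 2) <;> cases η (j - 1) <;> cases η (j - 2) <;> cases α j <;>
    simp

/-- The left end of an occupied block next to a hole wants to jump into it; it stays only if a
particle from the other side competes for the hole and the coin lets that one in. -/
lemma coin_eq_true_of_left_edge_stays (h₀ : η j = true) (h₁ : η (j + 1) = true)
    (hhole : η (j - 1) = false) (hstay : fstep η α j = true) : α (j - 1) = true := by
  rw [fstep_apply, h₀, h₁, hhole] at hstay
  revert hstay
  cases η (j - 2) <;> cases η (j - 3) <;> cases α (j - 1) <;> simp

lemma coin_eq_false_of_right_edge_stays (h₀ : η j = true) (h₁ : η (j - 1) = true)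
    (hhole : η (j + 1) = false) (hstay : fstep η α j = true) : α (j + 1) = false := by
  rw [fstep_apply, h₀, h₁, hhole] at hstay
  revert hstay
  cases η (j + 2) <;> cases η (j + 3) <;> cases α (j + 1) <;> simp

end OneStep

/-- The two sure one-step constraints behind a frozen empty site, on the side `d = ±1` of each
site `j`. -/
def StepRel (d : ℤ) (η η' : X) : Prop :=
  ∀ j, (η j = false → η' j = false → η (j + d) = false ∨ η (j + 2 * d) = false) ∧
    (η (j - d) = false → η j = true → η (j + d) = false → η' j = true)

lemma stepRel_fstep {d : ℤ} (hd : d = 1 ∨ d = -1) (η : X) (α : ℤ → Bool) :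
    StepRel d η (fstep η α) := by
  refine fun j => ⟨eq_false_or_eq_false_of_fstep_eq_false hd, fun h₀ h₁ h₂ => ?_⟩
  rcases hd with rfl | rfl
  · exact fstep_apply_of_isolated h₀ h₁ h₂
  · exact fstep_apply_of_isolated (by rwa [← sub_eq_add_neg] at h₂) h₁
      (by rwa [sub_neg_eq_add] at h₀)

lemma IsPathMeasure.ae_stepRel {μ : Measure X} {P : Measure (ℤ → X)} (hP : IsPathMeasure μ P)
    {d : ℤ} (hd : d = 1 ∨ d = -1) : ∀ᵐ ξ ∂P, ∀ t, StepRel d (ξ t) (ξ (t + 1)) :=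
  hP.ae_forall_step (by unfold StepRel; measurability) (stepRel_fstep hd)

section Trajectory

variable {ξ : ℤ → X} {d : ℤ}

def SettledFrom (ξ : ℤ → X) (d m T : ℤ) : Prop :=
  (∀ t ≥ T, ξ t m = false) ∨ ∀ t ≥ T, ξ t m = true ∧ ξ t (m + d) = false

lemma SettledFrom.mono {m T T' : ℤ} (h : SettledFrom ξ d m T) (hT : T ≤ T') :
    SettledFrom ξ d m T' :=
  h.imp (fun h t ht => h t (hT.trans ht)) fun h t ht => h t (hT.trans ht)

lemma SettledFrom.eq_false_or_eq_false {m T t : ℤ} (h : SettledFrom ξ d m T) (ht : T ≤ t) :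
    ξ t m = false ∨ ξ t (m + d) = false :=
  h.imp (· t ht) fun h => (h t ht).2

variable (hrel : ∀ t, StepRel d (ξ t) (ξ (t + 1)))
include hrel

lemma settledFrom_of_occupied {j T t₁ : ℤ} (hj : ∀ t ≥ T, ξ t j = false) (ht₁ : T ≤ t₁)
    (hocc : ξ t₁ (j + d) = true) : SettledFrom ξ d (j + d) t₁ := by
  have hfree : ∀ t ≥ T, ξ t (j + d) = true → ξ t (j + d + d) = false := fun t ht hocc => by
    have := (hrel t j).1 (hj t ht) (hj (t + 1) (by omega))
    rw [hocc, show j + 2 * d = j + d + d by ring] at this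
    simpa using this
  refine Or.inr fun t ht => ?_
  induction t, ht using Int.leInduction with
  | base => exact ⟨hocc, hfree t₁ ht₁ hocc⟩
  | succ t ht ih =>
    have hstay : ξ (t + 1) (j + d) = true :=
      (hrel t (j + d)).2 (by rw [add_sub_cancel_right]; exact hj t (by omega)) ih.1 ih.2
    exact ⟨hstay, hfree _ (by omega) hstay⟩

lemma SettledFrom.next {m T : ℤ} (h : SettledFrom ξ d m T) :
    ∃ T' ≥ T, SettledFrom ξ d (m + d) T' := by
  rcases h with hm | hm
  · by_cases hempty : ∀ t ≥ T, ξ t (m + d) = false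
    · exact ⟨T, le_rfl, Or.inl hempty⟩
    · push Not at hempty
      obtain ⟨t₁, ht₁, hocc⟩ := hempty
      exact ⟨t₁, ht₁, settledFrom_of_occupied hrel hm ht₁ (by simpa using hocc)⟩
  · exact ⟨T, le_rfl, Or.inl fun t ht => (hm t ht).2⟩

lemma exists_settledFrom_of_settledFrom {j T₀ : ℤ} (h : SettledFrom ξ d j T₀) (k : ℕ) :
    ∃ T, ∀ i : ℕ, i ≤ k → SettledFrom ξ d (j + i * d) T := by
  induction k with
  | zero => exact ⟨T₀, fun i hi => by simpa [Nat.le_zero.1 hi] using h⟩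
  | succ k ih =>
    obtain ⟨T, hT⟩ := ih
    obtain ⟨T', hTT', hT'⟩ := (hT k le_rfl).next hrel
    refine ⟨T', fun i hi => ?_⟩
    rcases Nat.lt_or_ge i (k + 1) with hi' | hi'
    · exact (hT i (by omega)).mono hTT'
    · rwa [show j + (i : ℤ) * d = j + k * d + d by
        rw [show i = k + 1 by omega]; push_cast; ring]

end Trajectory

def pairFreeNear (i₀ : ℤ) (k : ℕ) : Set X :=
  {η | ∀ m, i₀ - k ≤ m → m ≤ i₀ + k → η m = false ∨ η (m + 1) = false}

lemma antitone_pairFreeNear (i₀ : ℤ) : Antitone (pairFreeNear i₀) :=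
  fun _ _ hk _ hη m hm₁ hm₂ => hη m (by omega) (by omega)

lemma measurableSet_pairFreeNear (i₀ : ℤ) (k : ℕ) : MeasurableSet (pairFreeNear i₀ k) := by
  unfold pairFreeNear; measurability

lemma iInter_pairFreeNear (i₀ : ℤ) : ⋂ k, pairFreeNear i₀ k = frozenF := by
  ext η
  simp only [Set.mem_iInter, pairFreeNear, frozenF, Set.mem_ofPred_eq]
  exact ⟨fun h i => h (i - i₀).natAbs i (by omega) (by omega), fun h _ m _ _ => h m⟩

lemma eventually_mem_pairFreeNear {ξ : ℤ → X} (hrel : ∀ t, StepRel 1 (ξ t) (ξ (t + 1)))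
    (hrel' : ∀ t, StepRel (-1) (ξ t) (ξ (t + 1))) {i₀ : ℤ} (hi₀ : ∀ t, ξ t i₀ = false)
    (k : ℕ) : ∀ᶠ t in atTop, ξ t ∈ pairFreeNear i₀ k := by
  obtain ⟨T, hT⟩ := exists_settledFrom_of_settledFrom hrel (T₀ := 0) (.inl fun t _ => hi₀ t) k
  obtain ⟨T', hT'⟩ := exists_settledFrom_of_settledFrom hrel' (T₀ := 0) (.inl fun t _ => hi₀ t) k
  refine eventually_atTop.2 ⟨max T T', fun t ht m hm₁ hm₂ => ?_⟩
  rcases le_or_gt i₀ m with hm | hm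
  · have := (hT (m - i₀).toNat (by omega)).eq_false_or_eq_false (le_of_max_le_left ht)
    rwa [show i₀ + ((m - i₀).toNat : ℤ) * 1 = m by omega] at this
  · have := (hT' (i₀ - m - 1).toNat (by omega)).eq_false_or_eq_false (le_of_max_le_right ht)
    rw [show i₀ + ((i₀ - m - 1).toNat : ℤ) * -1 = m + 1 by omega, add_neg_cancel_right] at this
    exact this.symm

theorem IsPathMeasure.measure_forall_eq_false_eq_zero {μ : Measure X} {P : Measure (ℤ → X)}
    (hP : IsPathMeasure μ P) (hF : μ frozenF = 0) (i₀ : ℤ) :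
    P {ξ | ∀ t, ξ t i₀ = false} = 0 := by
  refine le_antisymm ?_ bot_le
  calc _ ≤ μ (⋂ k, pairFreeNear i₀ k) :=
        hP.measure_le_of_ae_eventually_mem (measurableSet_pairFreeNear i₀)
          (antitone_pairFreeNear i₀) fun k => by
            filter_upwards [hP.ae_stepRel (.inl rfl), hP.ae_stepRel (.inr rfl)] with ξ h h' hξ
            exact eventually_mem_pairFreeNear h h' hξ k
    _ = 0 := by rw [iInter_pairFreeNear, hF]

def occupiedBlock (i₀ : ℤ) (k : ℕ) : Set X :=
  {η | ∀ m, i₀ - k ≤ m → m ≤ i₀ + 1 + k → η m = true}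

lemma antitone_occupiedBlock (i₀ : ℤ) : Antitone (occupiedBlock i₀) :=
  fun _ _ hk _ hη m hm₁ hm₂ => hη m (by omega) (by omega)

lemma measurableSet_occupiedBlock (i₀ : ℤ) (k : ℕ) : MeasurableSet (occupiedBlock i₀ k) := by
  unfold occupiedBlock; measurability

lemma iInter_occupiedBlock (i₀ : ℤ) : ⋂ k, occupiedBlock i₀ k = {η | ∀ i, η i = true} := by
  ext η
  simp only [Set.mem_iInter, occupiedBlock, Set.mem_ofPred_eq]
  exact ⟨fun h i => h (i - i₀).natAbs i (by omega) (by omega), fun h _ m _ _ => h m⟩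

lemma QF_occupiedBlock_le_left {i₀ : ℤ} {k : ℕ} {η : X} (hη : η ∈ occupiedBlock i₀ k)
    (hhole : η (i₀ - k - 1) = false) :
    QF η (occupiedBlock i₀ k) ≤ coin {α | α (i₀ - k - 1) = true} := by
  rw [QF_apply _ (measurableSet_occupiedBlock i₀ k)]
  exact measure_mono fun α hα => coin_eq_true_of_left_edge_stays (hη _ le_rfl (by omega))
    (hη _ (by omega) (by omega)) hhole (hα _ le_rfl (by omega))

lemma QF_occupiedBlock_le_right {i₀ : ℤ} {k : ℕ} {η : X} (hη : η ∈ occupiedBlock i₀ k)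
    (hhole : η (i₀ + 1 + k + 1) = false) :
    QF η (occupiedBlock i₀ k) ≤ coin {α | α (i₀ + 1 + k + 1) = false} := by
  rw [QF_apply _ (measurableSet_occupiedBlock i₀ k)]
  exact measure_mono fun α hα => coin_eq_false_of_right_edge_stays (hη _ (by omega) le_rfl)
    (hη _ (by omega) (by omega)) hhole (hα _ (by omega) le_rfl)

lemma IsPathMeasure.ae_eventually_mem_occupiedBlock {μ : Measure X} {P : Measure (ℤ → X)}
    (hP : IsPathMeasure μ P) (i₀ : ℤ) (k : ℕ) :
    ∀ᵐ ξ ∂P, (∀ t, ξ t i₀ = true ∧ ξ t (i₀ + 1) = true) →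
      ∀ᶠ t in atTop, ξ t ∈ occupiedBlock i₀ k := by
  induction k with
  | zero =>
    refine .of_forall fun ξ hξ => .of_forall fun t m hm₁ hm₂ => ?_
    obtain rfl | rfl : m = i₀ ∨ m = i₀ + 1 := by push_cast at hm₁ hm₂; omega
    exacts [(hξ t).1, (hξ t).2]
  | succ k ih =>
    have hL := hP.ae_eventually_not_mem (measurableSet_occupiedBlock i₀ k)
      (measurableSet_coord (i₀ - k - 1) false) (coin_coord_lt_one _ true)
      fun η hη hhole => QF_occupiedBlock_le_left hη hhole
    have hR := hP.ae_eventually_not_mem (measurableSet_occupiedBlock i₀ k)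
      (measurableSet_coord (i₀ + 1 + k + 1) false) (coin_coord_lt_one _ false)
      fun η hη hhole => QF_occupiedBlock_le_right hη hhole
    filter_upwards [ih, hL, hR] with ξ hk hL hR hξ
    filter_upwards [hk hξ, hL (hk hξ), hR (hk hξ)] with t hblock hleft hright m hm₁ hm₂
    push_cast at hm₁ hm₂
    obtain rfl | rfl | hm :
        m = i₀ - k - 1 ∨ m = i₀ + 1 + k + 1 ∨ (i₀ - k ≤ m ∧ m ≤ i₀ + 1 + k) := by omega
    · simpa using hleft
    · simpa using hright
    · exact hblock m hm.1 hm.2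

theorem IsPathMeasure.measure_forall_pair_eq_true_eq_zero {μ : Measure X}
    {P : Measure (ℤ → X)} (hP : IsPathMeasure μ P) (hreg : RegF μ) (i₀ : ℤ) :
    P {ξ | ∀ t, ξ t i₀ = true ∧ ξ t (i₀ + 1) = true} = 0 := by
  refine le_antisymm ?_ bot_le
  calc _ ≤ μ (⋂ k, occupiedBlock i₀ k) :=
        hP.measure_le_of_ae_eventually_mem (measurableSet_occupiedBlock i₀)
          (antitone_occupiedBlock i₀) (hP.ae_eventually_mem_occupiedBlock i₀)
    _ = 0 := by rw [iInter_occupiedBlock]; exact hreg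

theorem no_frozen_interval_general
    (μ : Measure X) (hreg : RegF μ) (hF : μ frozenF = 0)
    (P : Measure (ℤ → X)) (hP : IsPathMeasure μ P)
    (I : Set ℤ) (hI : I.OrdConnected) (θ : ℤ → Bool)
    (hcase : (∃ i j, i ∈ I ∧ j ∈ I ∧ i ≠ j) ∨ (∃ i, I = {i} ∧ θ i = false)) :
    P {ξ : ℤ → X | ∀ t : ℤ, ∀ i ∈ I, ξ t i = θ i} = 0 := by
  have hempty {i : ℤ} (hi : i ∈ I) (hθ : θ i = false) :
      P {ξ : ℤ → X | ∀ t : ℤ, ∀ i ∈ I, ξ t i = θ i} = 0 :=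
    measure_mono_null (fun ξ hξ t => (hξ t i hi).trans hθ)
      (hP.measure_forall_eq_false_eq_zero hF i)
  rcases hcase with ⟨i, j, hi, hj, hij⟩ | ⟨i, rfl, hθ⟩
  · obtain ⟨a, ha, ha₁⟩ : ∃ a, a ∈ I ∧ a + 1 ∈ I := by
      rcases hij.lt_or_gt with h | h
      exacts [⟨i, hi, hI.out hi hj ⟨by omega, by omega⟩⟩,
        ⟨j, hj, hI.out hj hi ⟨by omega, by omega⟩⟩]
    cases hθa : θ a
    · exact hempty ha hθa
    cases hθa₁ : θ (a + 1)
    · exact hempty ha₁ hθa₁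
    refine measure_mono_null ?_ (hP.measure_forall_pair_eq_true_eq_zero hreg a)
    exact fun ξ hξ t => ⟨(hξ t a ha).trans hθa, (hξ t _ ha₁).trans hθa₁⟩
  · exact hempty rfl hθ

/-- For a regular TIS state `μ` with `μ(F) = 0`, the path measure gives
probability zero to the event that the configuration restricted to an interval `I` is
constantly equal to `θ`, provided `|I| ≥ 2`, or `I = {i}` with `θ(i) = 0`. -/
theorem no_frozen_interval
    (μ : Measure X) (hreg : RegF μ) (hμ : TISF μ) (hF : μ frozenF = 0)
    (P : Measure (ℤ → X)) (hP : IsPathMeasure μ P)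
    (I : Set ℤ) (hI : I.OrdConnected) (θ : ℤ → Bool)
    (hcase : (∃ i j, i ∈ I ∧ j ∈ I ∧ i ≠ j) ∨ (∃ i, I = {i} ∧ θ i = false)) :
    P {ξ : ℤ → X | ∀ t : ℤ, ∀ i ∈ I, ξ t i = θ i} = 0 :=
  no_frozen_interval_general μ hreg hF P hP I hI θ hcase

end FSSEPPaper
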